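/- arXiv:1708.06576 — 5 statements merged into one kernel-verified Lean document; each statement's English description precedes it below -/
import Mathlib

section
/- Let Γ be an extremal graph of girth at least 5 of order v ≥ 2, with e = f(v) edges, minimum degree δ = δ(Γ) and maximum degree Δ = Δ(Γ). Then f(v) − f(v−1) ≤ δ, δ² ≤ v − 1, ⌈2e/v⌉ ≤ Δ, and δ·Δ ≤ v − 1. -/
open SimpleGraph

/-- `Γ` has girth at least 5: every cycle has length at least 5. -/
def GirthAtLeast5 {V : Type*} (G : SimpleGraph V) : Prop :=
  ∀ ⦃u : V⦄ (w : G.Walk u u), w.IsCycle → 5 ≤ w.length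

/-- `maxEdges v` is `f(v)`: the maximum number of edges of a simple graph on `v`
vertices with girth at least 5. -/
noncomputable def maxEdges (v : ℕ) : ℕ :=
  sSup {e : ℕ | ∃ G : SimpleGraph (Fin v), GirthAtLeast5 G ∧ Nat.card G.edgeSet = e}

lemma girth5_embed {V W : Type*} {G : SimpleGraph V} {H : SimpleGraph W}
    (f : H ↪g G) (hg : GirthAtLeast5 G) : GirthAtLeast5 H := by
  intro u w hw
  have := hg (w.map f.toHom) (hw.map f.injective)
  simpa [SimpleGraph.Walk.length_map] using this

lemma no_triangle {V : Type*} {G : SimpleGraph V} (hg : GirthAtLeast5 G)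
    {a b c : V} (hab : G.Adj a b) (hbc : G.Adj b c) (hca : G.Adj c a) : False := by
  have h5 := hg (Walk.cons hab (Walk.cons hbc (Walk.cons hca Walk.nil)))
    (by simp [Walk.isCycle_def, Walk.isTrail_def, hab.ne, hbc.ne, hca.ne, hca.ne',
      Sym2.eq, Sym2.rel_iff', hab.ne', hbc.ne'])
  simp at h5

lemma no_square {V : Type*} {G : SimpleGraph V} (hg : GirthAtLeast5 G)
    {a b c d : V} (hab : G.Adj a b) (hbc : G.Adj b c) (hcd : G.Adj c d) (hda : G.Adj d a)
    (hac : a ≠ c) (hbd : b ≠ d) : False := by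
  have h5 := hg (Walk.cons hab (Walk.cons hbc (Walk.cons hcd (Walk.cons hda Walk.nil))))
    (by simp [Walk.isCycle_def, Walk.isTrail_def, hab.ne, hbc.ne, hcd.ne, hda.ne, hda.ne',
      Sym2.eq, Sym2.rel_iff', hab.ne', hbc.ne', hcd.ne', hac, hbd, hac.symm, hbd.symm])
  simp at h5

lemma maxEdges_bdd (v : ℕ) :
    BddAbove {e : ℕ | ∃ G : SimpleGraph (Fin v), GirthAtLeast5 G ∧ Nat.card G.edgeSet = e} := by
  refine ⟨Nat.card (Sym2 (Fin v)), ?_⟩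
  rintro e ⟨G, -, rfl⟩
  exact Nat.card_le_card_of_injective _ Subtype.val_injective

lemma le_maxEdges {W : Type*} [Fintype W] (H : SimpleGraph W) (hg : GirthAtLeast5 H) :
    Nat.card H.edgeSet ≤ maxEdges (Fintype.card W) := by
  set f := Fintype.equivFin W
  have iso : H ≃g H.map f.toEmbedding := SimpleGraph.Iso.map f H
  refine le_csSup (maxEdges_bdd _) ⟨H.map f.toEmbedding, girth5_embed iso.symm.toEmbedding hg, ?_⟩
  exact (Nat.card_eq_of_bijective _ iso.mapEdgeSet.bijective).symm

lemma moore {V : Type*} [Fintype V] [Nonempty V] (G : SimpleGraph V) [DecidableRel G.Adj]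
    (hg : GirthAtLeast5 G) : G.minDegree * G.maxDegree ≤ Fintype.card V - 1 := by
  classical
  rcases Nat.eq_zero_or_pos G.minDegree with h0 | hδ
  · simp [h0]
  obtain ⟨x, hx⟩ := G.exists_maximal_degree_vertex
  set N := G.neighborFinset x with hN
  set B := N.biUnion (fun y => G.neighborFinset y \ {x}) with hB
  have hxN : x ∉ N := by simp [hN]
  have hxB : x ∉ B := by simp [hB]
  have hNB : Disjoint N B := by
    rw [Finset.disjoint_left]
    intro z hzN hzB
    obtain ⟨y, hyN, hz⟩ := Finset.mem_biUnion.1 hzB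
    rw [hN] at hyN hzN
    simp only [Finset.mem_sdiff, mem_neighborFinset, Finset.mem_singleton] at hz hyN hzN
    exact no_triangle hg hyN hz.1 hzN.symm
  have hdisj : ∀ y1 ∈ N, ∀ y2 ∈ N, y1 ≠ y2 →
      Disjoint (G.neighborFinset y1 \ {x}) (G.neighborFinset y2 \ {x}) := by
    intro y1 h1 y2 h2 hne
    rw [Finset.disjoint_left]
    intro z hz1 hz2
    rw [hN] at h1 h2
    simp only [Finset.mem_sdiff, mem_neighborFinset, Finset.mem_singleton,
      mem_neighborFinset] at h1 h2 hz1 hz2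
    exact no_square hg h1 hz1.1 hz2.1.symm h2.symm (fun h => hz1.2 h.symm) hne
  have cardB : B.card = ∑ y ∈ N, (G.neighborFinset y \ {x}).card :=
    Finset.card_biUnion hdisj
  have hterm : ∀ y ∈ N, G.minDegree - 1 ≤ (G.neighborFinset y \ {x}).card := by
    intro y hy
    rw [hN, mem_neighborFinset] at hy
    have hxmem : {x} ⊆ G.neighborFinset y := by
      simp [Finset.singleton_subset_iff, mem_neighborFinset, hy.symm]
    rw [Finset.card_sdiff_of_subset hxmem, Finset.card_singleton, card_neighborFinset_eq_degree]
    have := G.minDegree_le_degree y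
    omega
  have hBge : N.card * (G.minDegree - 1) ≤ B.card := by
    rw [cardB]
    calc N.card * (G.minDegree - 1) = ∑ _y ∈ N, (G.minDegree - 1) := by
          rw [Finset.sum_const, smul_eq_mul]
      _ ≤ _ := Finset.sum_le_sum hterm
  have hcardN : N.card = G.maxDegree := by
    rw [hN, card_neighborFinset_eq_degree, hx]
  have htot : ({x} ∪ N ∪ B).card ≤ Fintype.card V := Finset.card_le_univ _
  have h1 : ({x} ∪ N ∪ B).card = 1 + N.card + B.card := by
    rw [Finset.card_union_of_disjoint, Finset.card_union_of_disjoint, Finset.card_singleton]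
    · simp [hxN]
    · simp only [Finset.disjoint_union_left]
      exact ⟨by simp [hxB], hNB⟩
  have key : 1 + G.maxDegree + G.maxDegree * (G.minDegree - 1) ≤ Fintype.card V := by
    rw [h1, hcardN] at htot
    have := hBge
    rw [hcardN] at this
    omega
  obtain ⟨d, hd⟩ : ∃ d, G.minDegree = d + 1 := ⟨G.minDegree - 1, by omega⟩
  rw [hd] at key ⊢
  simp only [Nat.add_sub_cancel] at key
  rw [Nat.add_mul, Nat.one_mul, Nat.mul_comm]
  omega

lemma delete_count {V : Type*} [Fintype V] [DecidableEq V] (G : SimpleGraph V)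
    [DecidableRel G.Adj] (x z0 : V) (hz0 : z0 ≠ x) :
    Nat.card G.edgeSet ≤ Nat.card (G.induce {x}ᶜ).edgeSet + G.degree x := by
  classical
  set s : Set V := {x}ᶜ with hs
  set π : V → s := fun y => if h : y = x then ⟨z0, hz0⟩ else ⟨y, h⟩ with hπ
  have hπval : ∀ y : V, y ≠ x → (π y : V) = y := by
    intro y hy; simp [hπ, hy]
  set F : Sym2 V → Sym2 s := Sym2.map π with hF
  have hsub : (F '' (G.edgeSet \ G.incidenceSet x)) ⊆ (G.induce s).edgeSet := by
    rintro e ⟨e', ⟨he', hni⟩, rfl⟩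
    induction e' using Sym2.ind with
    | _ a b =>
      have ha : a ≠ x := fun h => hni ⟨he', by simp [h]⟩
      have hb : b ≠ x := fun h => hni ⟨he', by simp [h]⟩
      simp only [hF, Sym2.map_pair_eq, mem_edgeSet] at *
      simp only [comap_adj, Function.Embedding.coe_subtype, hπval a ha, hπval b hb]
      exact he'
  have hinj : Set.InjOn F (G.edgeSet \ G.incidenceSet x) := by
    have hretr : ∀ e ∈ G.edgeSet \ G.incidenceSet x, Sym2.map (Subtype.val : s → V) (F e) = e := by
      rintro e ⟨he, hni⟩
      induction e using Sym2.ind with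
      | _ a b =>
        have ha : a ≠ x := fun h => hni ⟨he, by simp [h]⟩
        have hb : b ≠ x := fun h => hni ⟨he, by simp [h]⟩
        simp [hF, Sym2.map_pair_eq, hπval a ha, hπval b hb]
    intro e1 h1 e2 h2 heq
    rw [← hretr e1 h1, ← hretr e2 h2, heq]
  have hkey : (G.edgeSet \ G.incidenceSet x).ncard ≤ (G.induce s).edgeSet.ncard := by
    rw [← Set.ncard_image_of_injOn hinj]
    exact Set.ncard_le_ncard hsub (Set.toFinite _)
  have hsplit : G.edgeSet.ncard ≤ (G.edgeSet \ G.incidenceSet x).ncard + (G.incidenceSet x).ncard := by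
    have h2 : G.edgeSet ⊆ (G.edgeSet \ G.incidenceSet x) ∪ G.incidenceSet x := by
      intro e he
      by_cases h : e ∈ G.incidenceSet x
      · exact Or.inr h
      · exact Or.inl ⟨he, h⟩
    calc G.edgeSet.ncard ≤ ((G.edgeSet \ G.incidenceSet x) ∪ G.incidenceSet x).ncard :=
          Set.ncard_le_ncard h2 (Set.toFinite _)
      _ ≤ _ := Set.ncard_union_le _ _
  have hinc : (G.incidenceSet x).ncard = G.degree x := by
    rw [← Nat.card_coe_set_eq, Nat.card_eq_fintype_card]
    convert G.card_incidenceSet_eq_degree x using 2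
  rw [Nat.card_coe_set_eq, Nat.card_coe_set_eq]
  omega

theorem stmt0 {V : Type*} [Fintype V] [Nonempty V] (G : SimpleGraph V) [DecidableRel G.Adj]
    (v : ℕ) (hv : 2 ≤ v) (hcard : Fintype.card V = v)
    (hg : GirthAtLeast5 G)
    (hext : Nat.card G.edgeSet = maxEdges v) :
    maxEdges v - maxEdges (v - 1) ≤ G.minDegree ∧
    G.minDegree ^ 2 ≤ v - 1 ∧
    (2 * maxEdges v + v - 1) / v ≤ G.maxDegree ∧
    G.minDegree * G.maxDegree ≤ v - 1 := by
  classical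
  have hmoore : G.minDegree * G.maxDegree ≤ v - 1 := by
    rw [← hcard]; exact moore G hg
  have hδΔ : G.minDegree ≤ G.maxDegree := by
    obtain ⟨x⟩ := ‹Nonempty V›
    exact (G.minDegree_le_degree x).trans (G.degree_le_maxDegree x)
  have hsq : G.minDegree ^ 2 ≤ v - 1 := by
    calc G.minDegree ^ 2 = G.minDegree * G.minDegree := sq G.minDegree
      _ ≤ G.minDegree * G.maxDegree := Nat.mul_le_mul_left _ hδΔ
      _ ≤ v - 1 := hmoore
  -- part 1
  have hpart1 : maxEdges v - maxEdges (v - 1) ≤ G.minDegree := by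
    obtain ⟨x, hx⟩ := G.exists_minimal_degree_vertex
    obtain ⟨z0, hz0⟩ := Fintype.exists_ne_of_one_lt_card (by omega) x
    have hdel := delete_count G x z0 hz0
    have hcompl : Fintype.card ({x}ᶜ : Set V) = v - 1 := by
      rw [Fintype.card_compl_set]
      simp [hcard]
    have hH : Nat.card (G.induce ({x}ᶜ : Set V)).edgeSet ≤ maxEdges (v - 1) := by
      have := le_maxEdges (G.induce ({x}ᶜ : Set V))
        (girth5_embed (SimpleGraph.Embedding.induce _) hg)
      rwa [hcompl] at this
    rw [hx]
    omega
  -- part 3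
  have hpart3 : (2 * maxEdges v + v - 1) / v ≤ G.maxDegree := by
    have hE : 2 * maxEdges v = ∑ y, G.degree y := by
      rw [G.sum_degrees_eq_twice_card_edges, ← hext]
      congr 1
      rw [edgeFinset_card, Nat.card_eq_fintype_card]
    have hsum : ∑ y, G.degree y ≤ v * G.maxDegree := by
      calc ∑ y, G.degree y ≤ ∑ _y : V, G.maxDegree :=
            Finset.sum_le_sum (fun y _ => G.degree_le_maxDegree y)
        _ = v * G.maxDegree := by rw [Finset.sum_const, Finset.card_univ, hcard, smul_eq_mul]
    have hvpos : 0 < v := by omega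
    have hlt : 2 * maxEdges v + v - 1 < (G.maxDegree + 1) * v := by
      have hc : (G.maxDegree + 1) * v = v * G.maxDegree + v := by ring
      omega
    have := (Nat.div_lt_iff_lt_mul hvpos).mpr hlt
    omega
  exact ⟨hpart1, hsq, hpart3, hmoore⟩
end

section
/- Let v ≥ 2 and let Γ be an extremal graph of girth at least 5 on v vertices whose minimum degree δ satisfies δ = f(v) − f(v−1). Then for every vertex x of Γ of degree δ, the graph Γ − x obtained by deleting x and all edges on it is an extremal graph of girth at least 5 on v − 1 vertices, and the δ neighbours of x are pairwise at distance exactly 3 from each other in Γ − x. -/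
open SimpleGraph

/-!
Deleting a vertex `x` of minimum degree `δ = f(v) - f(v - 1)` from an extremal graph removes `δ`
edges and keeps the girth at least 5, so `Γ - x` has `f(v - 1)` edges and is extremal. Two
neighbours `a ≠ b` of `x` cannot be joined in `Γ - x` by a path of length at most 2, which together
with `a - x - b` would close a cycle of length at most 4. If they were at distance at least 4 (or
disconnected), the edge `ab` could be added to the extremal graph `Γ - x` without creating a cycle
of length less than 5.
-/

namespace SimpleGraph.Walk

variable {V : Type*} {G : SimpleGraph V}

theorem IsTrail.exists_walk_notMem_edges_length_lt {u a b : V} {c : G.Walk u u}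
    (hc : c.IsTrail) (h : s(a, b) ∈ c.edges) :
    ∃ p : G.Walk a b, s(a, b) ∉ p.edges ∧ p.length < c.length := by
  classical
  have ha := c.fst_mem_support_of_mem_edges h
  set c' := c.rotate a ha
  have h' : s(a, b) ∈ c'.edges := (c.rotate_edges a ha).mem_iff.mpr h
  have hb : b ∈ c'.support := c'.snd_mem_support_of_mem_edges h'
  have hab : a ≠ b := (c'.adj_of_mem_edges h').ne
  have hdisj := (hc.rotate ha).disjoint_edges_takeUntil_dropUntil hb
  have hlen : (c'.takeUntil b hb).length + (c'.dropUntil b hb).length = c.length := by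
    rw [← length_append, take_spec, length_rotate]
  have htake : (c'.takeUntil b hb).length ≠ 0 := fun h0 => hab (eq_of_length_eq_zero h0)
  have hdrop : (c'.dropUntil b hb).length ≠ 0 := fun h0 => hab (eq_of_length_eq_zero h0).symm
  by_cases hmem : s(a, b) ∈ (c'.takeUntil b hb).edges
  · refine ⟨(c'.dropUntil b hb).reverse, ?_, ?_⟩
    · rw [edges_reverse, List.mem_reverse]
      exact hdisj hmem
    · rw [length_reverse]
      omega
  · exact ⟨c'.takeUntil b hb, hmem, by omega⟩

end SimpleGraph.Walk

section Girth

variable {V W : Type*} {G : SimpleGraph V}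

theorem GirthAtLeast5.of_embedding {H : SimpleGraph W} (hH : GirthAtLeast5 H) (f : G ↪g H) :
    GirthAtLeast5 G := fun _ w hw => by
  simpa using hH (w.map f.toHom) (hw.map f.injective)

theorem GirthAtLeast5.induce (hG : GirthAtLeast5 G) (s : Set V) :
    GirthAtLeast5 (G.induce s) :=
  hG.of_embedding (Embedding.induce s)

theorem GirthAtLeast5.of_induce_of_support_subset {s : Set V}
    (hG : GirthAtLeast5 (G.induce s)) (hs : G.support ⊆ s) : GirthAtLeast5 G := by
  intro u w hw
  have hw_s : ∀ y ∈ w.support, y ∈ s := fun y hy =>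
    hs (mem_support_of_mem_walk_support w hw.not_nil hy)
  have hmap := Walk.map_induce w hw_s
  have hcyc : (w.induce s hw_s).IsCycle := Walk.IsCycle.of_map (hmap ▸ hw)
  have := hG _ hcyc
  rwa [← Walk.length_map, hmap] at this

theorem GirthAtLeast5.map (hG : GirthAtLeast5 G) (f : V ↪ W) : GirthAtLeast5 (G.map f) := by
  have hrange : GirthAtLeast5 ((G.map f).induce (Set.range f)) :=
    hG.of_embedding (Embedding.map f G).isoInduceRange.symm.toEmbedding
  refine hrange.of_induce_of_support_subset ?_
  rw [support_map]
  exact Set.image_subset_range _ _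

theorem GirthAtLeast5.five_le_length_add {u v : V} (hG : GirthAtLeast5 G) {p q : G.Walk u v}
    (hp : p.IsPath) (hq : q.IsPath) (hne : p ≠ q) : 5 ≤ p.length + q.length := by
  obtain ⟨_, -, -, c, hc, hlen⟩ := hp.exists_isCycle_length_le_add_of_ne hq hne
  exact (hG c hc).trans hlen

theorem GirthAtLeast5.three_le_dist_induce (hG : GirthAtLeast5 G) {s : Set V} {x : V}
    (hx : x ∉ s) {a b : s} (ha : G.Adj x a) (hb : G.Adj x b) (hab : a ≠ b)
    (hr : (G.induce s).Reachable a b) : 3 ≤ (G.induce s).dist a b := by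
  obtain ⟨p, hp, hlen⟩ := hr.exists_path_of_dist
  set q : G.Walk a b := p.map (Embedding.induce s).toHom
  have hq : q.IsPath := hp.map (Embedding.induce (G := G) s).injective
  set r : G.Walk a b := .cons ha.symm (.cons hb .nil)
  have hr : r.IsPath := by
    simp [r, ha.ne', hb.ne, Subtype.val_injective.ne hab]
  have hne : q ≠ r := by
    intro hqr
    have hxq : x ∈ q.support := hqr ▸ by simp [r]
    have hsupp : q.support = p.support.map (↑) := Walk.support_map _ _
    rw [hsupp, List.mem_map] at hxq
    obtain ⟨y, -, hy⟩ := hxq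
    exact hx (hy ▸ y.2)
  have hqlen : q.length = p.length := Walk.length_map _ _
  have := hG.five_le_length_add hq hr hne
  simp only [hqlen, hlen, r, Walk.length_cons, Walk.length_nil] at this
  omega

theorem GirthAtLeast5.sup_edge (hG : GirthAtLeast5 G) {a b : V}
    (hlong : ∀ p : G.Walk a b, 3 < p.length) : GirthAtLeast5 (G ⊔ edge a b) := by
  have hab : a ≠ b := by
    rintro rfl
    exact absurd (hlong .nil) (by simp)
  have hedges : ∀ {x y : V} (q : (G ⊔ edge a b).Walk x y), s(a, b) ∉ q.edges →
      ∀ e ∈ q.edges, e ∈ G.edgeSet := by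
    intro x y q hq e he
    have := q.edges_subset_edgeSet he
    rw [edgeSet_sup, edgeSet_edge_of_ne hab, Set.union_singleton, Set.mem_insert_iff] at this
    exact this.resolve_left (by rintro rfl; exact hq he)
  intro u w hw
  by_cases he : s(a, b) ∈ w.edges
  · obtain ⟨p, hp, hlen⟩ := hw.isTrail.exists_walk_notMem_edges_length_lt he
    have := hlong (p.transfer G (hedges p hp))
    rw [Walk.length_transfer] at this
    omega
  · simpa using hG _ (hw.transfer (hedges w he))

theorem GirthAtLeast5.bot : GirthAtLeast5 (⊥ : SimpleGraph V) :=
  fun _ w hw => absurd (w.adj_snd hw.not_nil) (by simp)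

end Girth

theorem bddAbove_girthAtLeast5_card_edgeSet (n : ℕ) :
    BddAbove {e : ℕ | ∃ G : SimpleGraph (Fin n), GirthAtLeast5 G ∧ Nat.card G.edgeSet = e} := by
  refine ⟨Nat.card (Sym2 (Fin n)), ?_⟩
  rintro _ ⟨G, -, rfl⟩
  exact Nat.card_le_card_of_injective _ Subtype.val_injective

theorem card_edgeSet_le_maxEdges {W : Type*} [Finite W] {H : SimpleGraph W}
    (hH : GirthAtLeast5 H) : Nat.card H.edgeSet ≤ maxEdges (Nat.card W) := by
  let e : W ≃ Fin (Nat.card W) := Finite.equivFin W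
  refine le_csSup (bddAbove_girthAtLeast5_card_edgeSet _) ⟨H.map e.toEmbedding, ?_, ?_⟩
  · exact hH.map e.toEmbedding
  · exact Nat.card_congr (Iso.map e H).mapEdgeSet.symm

theorem maxEdges_mono : Monotone maxEdges := by
  intro m n hmn
  refine csSup_le ⟨0, ⊥, GirthAtLeast5.bot, by simp⟩ ?_
  rintro _ ⟨G, hG, rfl⟩
  calc Nat.card G.edgeSet
      ≤ Nat.card (G.map (Fin.castLEEmb hmn)).edgeSet :=
        Nat.card_le_card_of_injective _ (Embedding.map _ G).mapEdgeSet.injective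
    _ ≤ maxEdges n := by
        simpa using card_edgeSet_le_maxEdges (hG.map (Fin.castLEEmb hmn))

theorem exists_walk_length_le_three_of_maxEdges_le_card_edgeSet {W : Type*} [Finite W]
    {H : SimpleGraph W} (hH : GirthAtLeast5 H) (hmax : maxEdges (Nat.card W) ≤ Nat.card H.edgeSet)
    {a b : W} (hab : a ≠ b) : ∃ p : H.Walk a b, p.length ≤ 3 := by
  by_contra! hlong
  have hnadj : ¬ H.Adj a b := fun h => by simpa using hlong h.toWalk
  have hcard : Nat.card (H ⊔ edge a b).edgeSet = Nat.card H.edgeSet + 1 := by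
    rw [edgeSet_sup, edgeSet_edge_of_ne hab, Set.union_singleton, Nat.card_coe_set_eq,
      Set.ncard_insert_of_notMem (show s(a, b) ∉ H.edgeSet from hnadj), Nat.card_coe_set_eq]
  have := card_edgeSet_le_maxEdges (hH.sup_edge hlong)
  omega

theorem card_edgeSet_induce_compl_singleton_add_degree {V : Type*} [Fintype V]
    (G : SimpleGraph V) [DecidableRel G.Adj] (x : V) :
    Nat.card (G.induce {x}ᶜ).edgeSet + G.degree x = Nat.card G.edgeSet := by
  classical
  simp only [Nat.card_eq_fintype_card, ← edgeFinset_card]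
  rw [card_edgeFinset_induce_compl_singleton, card_edgeFinset_deleteIncidenceSet]
  have := G.degree_le_card_edgeFinset x
  omega

theorem stmt2_general {V : Type*} [Fintype V] (G : SimpleGraph V) [DecidableRel G.Adj]
    (v : ℕ) (hcard : Fintype.card V = v)
    (hg : GirthAtLeast5 G)
    (hext : Nat.card G.edgeSet = maxEdges v)
    (hdelta : G.minDegree = maxEdges v - maxEdges (v - 1)) :
    ∀ x : V, G.degree x = G.minDegree →
      GirthAtLeast5 (G.induce {y : V | y ≠ x}) ∧
      Nat.card (G.induce {y : V | y ≠ x}).edgeSet = maxEdges (v - 1) ∧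
      ∀ (a b : V) (ha : G.Adj x a) (hb : G.Adj x b), a ≠ b →
        (G.induce {y : V | y ≠ x}).dist ⟨a, ha.ne'⟩ ⟨b, hb.ne'⟩ = 3 := by
  intro x hx
  have hgirth := hg.induce {y | y ≠ x}
  have hcard_s : Nat.card {y : V | y ≠ x} = v - 1 := by
    classical
    rw [Nat.card_eq_fintype_card, Set.card_ne_eq, hcard]
  have hle := card_edgeSet_le_maxEdges hgirth
  have hsplit := card_edgeSet_induce_compl_singleton_add_degree G x
  have hmono := maxEdges_mono (Nat.sub_le v 1)
  have hdeg : G.degree x = maxEdges v - maxEdges (v - 1) := hx.trans hdelta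
  rw [hcard_s] at hle
  rw [Set.compl_singleton_eq] at hsplit
  have hext' : Nat.card (G.induce {y | y ≠ x}).edgeSet = maxEdges (v - 1) := by omega
  refine ⟨hgirth, hext', fun a b ha hb hab => ?_⟩
  have hab' : (⟨a, ha.ne'⟩ : {y | y ≠ x}) ≠ ⟨b, hb.ne'⟩ := by simpa using hab
  obtain ⟨p, hp⟩ := exists_walk_length_le_three_of_maxEdges_le_card_edgeSet hgirth
    (by rw [hcard_s, hext']) hab'
  have := hg.three_le_dist_induce (by simp) ha hb hab' ⟨p⟩
  have := dist_le p
  omega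

theorem stmt2 {V : Type*} [Fintype V] (G : SimpleGraph V) [DecidableRel G.Adj]
    (v : ℕ) (hv : 2 ≤ v) (hcard : Fintype.card V = v)
    (hg : GirthAtLeast5 G)
    (hext : Nat.card G.edgeSet = maxEdges v)
    (hdelta : G.minDegree = maxEdges v - maxEdges (v - 1)) :
    ∀ x : V, G.degree x = G.minDegree →
      GirthAtLeast5 (G.induce {y : V | y ≠ x}) ∧
      Nat.card (G.induce {y : V | y ≠ x}).edgeSet = maxEdges (v - 1) ∧
      ∀ (a b : V) (ha : G.Adj x a) (hb : G.Adj x b), a ≠ b →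
        (G.induce {y : V | y ≠ x}).dist ⟨a, ha.ne'⟩ ⟨b, hb.ne'⟩ = 3 :=
  stmt2_general G v hcard hg hext hdelta
end

section
/- If B is a prelinear space on a set of 12 points consisting of exactly 8 blocks, each of size 4, then every two blocks of B intersect. -/
/-!
Suppose two blocks `b, b'` were disjoint, and let `W` be the four points outside `b ∪ b'`. Each of
the other six blocks meets `b` and `b'` in at most one point each, hence `W` in at least two; since
no pair of points lies on two blocks and `W` has only six pairs, each of them meets `W` in exactly
one pair and `T = b ∪ b'` in two points. Two of these blocks through a point of `T` have disjoint
pairs in `W`, so each point of `T` lies on at most two of them; as there are twelve incidences on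
the eight points of `T`, at least four points lie on exactly two. The two blocks through such a
point carry complementary pairs of `W`, so no block contains two such points, and counting
incidences again there are at most three of them.
-/

open Finset

section Prelinear

variable {α : Type*} [DecidableEq α]

def IsPrelinear (C : Finset (Finset α)) : Prop :=
  ∀ c ∈ C, ∀ d ∈ C, c ≠ d → #(c ∩ d) ≤ 1

theorem disjoint_inter_inter_of_card_inter_le_one {c d W : Finset α} {x : α}
    (hcd : #(c ∩ d) ≤ 1) (hxc : x ∈ c) (hxd : x ∈ d) (hxW : x ∉ W) :
    Disjoint (c ∩ W) (d ∩ W) := by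
  refine disjoint_left.2 fun y hyc hyd => ?_
  obtain ⟨hyc, hyW⟩ := mem_inter.1 hyc
  obtain rfl : y = x :=
    card_le_one.1 hcd y (mem_inter.2 ⟨hyc, mem_of_mem_inter_left hyd⟩) x (mem_inter.2 ⟨hxc, hxd⟩)
  exact hxW hyW

theorem inter_eq_sdiff_of_card_inter_le_one {c d W : Finset α} {x : α}
    (hcd : #(c ∩ d) ≤ 1) (hxc : x ∈ c) (hxd : x ∈ d) (hxW : x ∉ W)
    (hcard : #(c ∩ W) + #(d ∩ W) = #W) : d ∩ W = W \ (c ∩ W) := by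
  have hdisj := disjoint_inter_inter_of_card_inter_le_one hcd hxc hxd hxW
  refine eq_of_subset_of_card_le (subset_sdiff.2 ⟨inter_subset_right, hdisj.symm⟩) ?_
  rw [card_sdiff_of_subset inter_subset_right]
  omega

theorem sum_card_filter_mem_eq_sum_card_inter (s : Finset α) (C : Finset (Finset α)) :
    ∑ x ∈ s, #{c ∈ C | x ∈ c} = ∑ c ∈ C, #(c ∩ s) := by
  refine (sum_card_bipartiteAbove_eq_sum_card_bipartiteBelow (r := fun x c => x ∈ c)).trans
    (sum_congr rfl fun c _ => ?_)
  rw [bipartiteBelow, filter_mem_eq_inter, inter_comm]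

namespace IsPrelinear

variable {C : Finset (Finset α)}

theorem mono {D : Finset (Finset α)} (hC : IsPrelinear C) (hD : D ⊆ C) : IsPrelinear D :=
  fun c hc d hd => hC c (hD hc) d (hD hd)

theorem eq_of_inter_eq (hC : IsPrelinear C) {c d W : Finset α} (hc : c ∈ C) (hd : d ∈ C)
    (h2 : 2 ≤ #(c ∩ W)) (h : c ∩ W = d ∩ W) : c = d := by
  by_contra hcd
  have hsub : c ∩ W ⊆ c ∩ d := subset_inter inter_subset_left (h ▸ inter_subset_left)
  have := (card_le_card hsub).trans (hC c hc d hd hcd)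
  omega

theorem sum_choose_card_inter_le (hC : IsPrelinear C) (W : Finset α) :
    ∑ c ∈ C, (#(c ∩ W)).choose 2 ≤ (#W).choose 2 := by
  have hdisj : (C : Set (Finset α)).PairwiseDisjoint fun c => (c ∩ W).powersetCard 2 := by
    intro c hc d hd hcd
    refine disjoint_left.2 fun p hpc hpd => ?_
    rw [mem_powersetCard] at hpc hpd
    have hsub : p ⊆ c ∩ d :=
      subset_inter (hpc.1.trans inter_subset_left) (hpd.1.trans inter_subset_left)
    have := (card_le_card hsub).trans (hC c hc d hd hcd)
    omega
  calc ∑ c ∈ C, (#(c ∩ W)).choose 2 = #(C.biUnion fun c => (c ∩ W).powersetCard 2) := by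
        simp only [card_biUnion hdisj, card_powersetCard]
    _ ≤ #(W.powersetCard 2) :=
        card_le_card (biUnion_subset.2 fun c _ => powersetCard_mono inter_subset_right)
    _ = (#W).choose 2 := card_powersetCard _ _

theorem sum_card_inter_filter_mem_le (hC : IsPrelinear C) {W : Finset α} {x : α} (hxW : x ∉ W) :
    ∑ c ∈ C with x ∈ c, #(c ∩ W) ≤ #W := by
  have hdisj : (↑{c ∈ C | x ∈ c} : Set (Finset α)).PairwiseDisjoint (· ∩ W) := by
    intro c hc d hd hcd
    simp only [mem_coe, mem_filter] at hc hd
    exact disjoint_inter_inter_of_card_inter_le_one (hC c hc.1 d hd.1 hcd) hc.2 hd.2 hxW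
  rw [← card_biUnion hdisj]
  exact card_le_card (biUnion_subset.2 fun c _ => inter_subset_right)

theorem card_inter_eq_two (hC : IsPrelinear C) {W : Finset α} (hCW : #C = (#W).choose 2)
    (h2 : ∀ c ∈ C, 2 ≤ #(c ∩ W)) : ∀ c ∈ C, #(c ∩ W) = 2 := by
  have hone : ∀ c ∈ C, 1 ≤ (#(c ∩ W)).choose 2 := fun c hc => Nat.choose_pos (h2 c hc)
  have hsum : ∑ c ∈ C, 1 = ∑ c ∈ C, (#(c ∩ W)).choose 2 := by
    refine le_antisymm (sum_le_sum hone) ?_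
    rw [← card_eq_sum_ones, hCW]
    exact hC.sum_choose_card_inter_le W
  intro c hc
  have hc1 := ((sum_eq_sum_iff_of_le hone).1 hsum c hc).symm
  by_contra hne
  have h3 : Nat.choose 3 2 ≤ (#(c ∩ W)).choose 2 :=
    Nat.choose_le_choose 2 (by have := h2 c hc; omega)
  have h32 : Nat.choose 3 2 = 3 := rfl
  omega

theorem eq_of_mem_of_exists_mem_ne (hC : IsPrelinear C) {W c : Finset α} {x y : α}
    (hW : #W = 4) (hCW : ∀ c ∈ C, #(c ∩ W) = 2) (hc : c ∈ C) (hxc : x ∈ c) (hyc : y ∈ c)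
    (hxW : x ∉ W) (hyW : y ∉ W) (hx : ∃ d ∈ C, d ≠ c ∧ x ∈ d) (hy : ∃ e ∈ C, e ≠ c ∧ y ∈ e) :
    x = y := by
  -- the other block through `x` and the one through `y` are both the block whose trace on `W` is
  -- complementary to that of `c`
  obtain ⟨d, hd, hdc, hxd⟩ := hx
  obtain ⟨e, he, hec, hye⟩ := hy
  have hcompl : ∀ {d : Finset α} {z : α}, d ∈ C → d ≠ c → z ∈ c → z ∈ d → z ∉ W →
      d ∩ W = W \ (c ∩ W) := fun hd hdc hzc hzd hzW =>
    inter_eq_sdiff_of_card_inter_le_one (hC c hc _ hd (Ne.symm hdc)) hzc hzd hzW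
      (by rw [hCW c hc, hCW _ hd, hW])
  obtain rfl : d = e := hC.eq_of_inter_eq hd he (hCW d hd).ge
    ((hcompl hd hdc hxc hxd hxW).trans (hcompl he hec hyc hye hyW).symm)
  exact card_le_one.1 (hC c hc d hd (Ne.symm hdc)) x (mem_inter.2 ⟨hxc, hxd⟩)
    y (mem_inter.2 ⟨hyc, hye⟩)

theorem three_mul_card_le_two_mul_card (hC : IsPrelinear C) {W T : Finset α} (hW : #W = 4)
    (hTW : Disjoint T W) (hCW : ∀ c ∈ C, #(c ∩ W) = 2) (hCT : ∀ c ∈ C, #(c ∩ T) = 2) :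
    3 * #C ≤ 2 * #T := by
  have hdeg : ∀ x ∈ T, #{c ∈ C | x ∈ c} ≤ 2 := by
    intro x hx
    have := hC.sum_card_inter_filter_mem_le (disjoint_left.1 hTW hx)
    rw [sum_congr rfl fun c hc => hCW c (mem_filter.1 hc).1, sum_const, smul_eq_mul, hW] at this
    omega
  set S := {x ∈ T | #{c ∈ C | x ∈ c} = 2}
  have hincT : ∑ x ∈ T, #{c ∈ C | x ∈ c} = 2 * #C := by
    rw [sum_card_filter_mem_eq_sum_card_inter, sum_congr rfl hCT, sum_const, smul_eq_mul, mul_comm]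
  have hincS : 2 * #S = ∑ c ∈ C, #(c ∩ S) := by
    rw [← sum_card_filter_mem_eq_sum_card_inter, sum_congr rfl fun x hx => (mem_filter.1 hx).2,
      sum_const, smul_eq_mul, mul_comm]
  have hTS : ∑ x ∈ T, #{c ∈ C | x ∈ c} ≤ #T + #S :=
    calc ∑ x ∈ T, #{c ∈ C | x ∈ c} ≤ ∑ x ∈ T, (1 + if #{c ∈ C | x ∈ c} = 2 then 1 else 0) :=
          sum_le_sum fun x hx => by have := hdeg x hx; split_ifs <;> omega
      _ = #T + #S := by rw [sum_add_distrib, card_filter, sum_const, smul_eq_mul, mul_one]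
  have hother : ∀ x ∈ S, ∀ c, ∃ d ∈ C, d ≠ c ∧ x ∈ d := fun x hx c => by
    obtain ⟨d, hd, hdc⟩ := exists_mem_ne (by rw [(mem_filter.1 hx).2]; omega) c
    exact ⟨d, (mem_filter.1 hd).1, hdc, (mem_filter.1 hd).2⟩
  have hSC : ∑ c ∈ C, #(c ∩ S) ≤ #C := by
    refine (sum_le_sum fun c hc => card_le_one.2 fun x hx y hy => ?_).trans_eq
      (card_eq_sum_ones C).symm
    obtain ⟨hxc, hxS⟩ := mem_inter.1 hx
    obtain ⟨hyc, hyS⟩ := mem_inter.1 hy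
    exact hC.eq_of_mem_of_exists_mem_ne hW hCW hc hxc hyc
      (disjoint_left.1 hTW (mem_filter.1 hxS).1) (disjoint_left.1 hTW (mem_filter.1 hyS).1)
      (hother x hxS c) (hother y hyS c)
  omega

end IsPrelinear

end Prelinear

theorem stmt4 {α : Type*} [DecidableEq α] (V : Finset α) (B : Finset (Finset α))
    (hV : V.card = 12) (hB : B.card = 8)
    (hsub : ∀ b ∈ B, b ⊆ V) (hsize : ∀ b ∈ B, b.card = 4)
    (hlin : ∀ b ∈ B, ∀ b' ∈ B, b ≠ b' → (b ∩ b').card ≤ 1) :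
    ∀ b ∈ B, ∀ b' ∈ B, (b ∩ b').Nonempty := by
  intro b hb b' hb'
  by_contra hbb'
  rw [not_nonempty_iff_eq_empty, ← disjoint_iff_inter_eq_empty] at hbb'
  have hne : b ≠ b' := by
    rintro rfl
    have := hsize b hb
    rw [disjoint_self.1 hbb'] at this
    simp at this
  set T := b ∪ b'
  set W := V \ T
  set C := (B.erase b).erase b'
  have hCB : C ⊆ B := (erase_subset _ _).trans (erase_subset _ _)
  have hT : #T = 8 := by rw [card_union_of_disjoint hbb', hsize b hb, hsize b' hb']
  have hW : #W = 4 := by rw [card_sdiff_of_subset (union_subset (hsub b hb) (hsub b' hb')), hT, hV]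
  have hC : #C = 6 := by
    rw [card_erase_of_mem (mem_erase.2 ⟨hne.symm, hb'⟩), card_erase_of_mem hb, hB]
  have hsplit : ∀ c ∈ C, #(c ∩ T) + #(c ∩ W) = 4 := fun c hc => by
    rw [← inter_sdiff_assoc, inter_eq_left.2 (hsub c (hCB hc)), card_inter_add_card_sdiff,
      hsize c (hCB hc)]
  have hCT_le : ∀ c ∈ C, #(c ∩ T) ≤ 2 := fun c hc => by
    obtain ⟨hcb', hc'⟩ := mem_erase.1 hc
    obtain ⟨hcb, hcB⟩ := mem_erase.1 hc'
    calc #(c ∩ T) ≤ #(c ∩ b) + #(c ∩ b') := by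
          rw [inter_union_distrib_left]; exact card_union_le _ _
      _ ≤ 1 + 1 := add_le_add (hlin c hcB b hb hcb) (hlin c hcB b' hb' hcb')
  have hlinC : IsPrelinear C := IsPrelinear.mono hlin hCB
  have hCW : ∀ c ∈ C, #(c ∩ W) = 2 := hlinC.card_inter_eq_two (by rw [hC, hW]; rfl)
    fun c hc => by have := hsplit c hc; have := hCT_le c hc; omega
  have hcount := hlinC.three_mul_card_le_two_mul_card hW disjoint_sdiff hCW
    fun c hc => by have := hsplit c hc; have := hCW c hc; omega
  omega
end

section
/- If B is a prelinear space on a set of 13 points consisting of exactly 9 blocks, each of size 4, then (1) B contains no three pairwise disjoint blocks, and (2) the number of unordered pairs of disjoint blocks of B is at most 3. -/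
open Finset

private lemma stmt5_quad (d : ℕ) : 72 * d ≤ 13 * (d * d) + 99 := by
  rcases Nat.lt_or_ge d 3 with h | h
  · interval_cases d <;> norm_num
  · obtain ⟨e, rfl⟩ := Nat.exists_eq_add_of_le h
    nlinarith

theorem stmt5 {α : Type*} [DecidableEq α] (V : Finset α) (B : Finset (Finset α))
    (hV : V.card = 13) (hB : B.card = 9)
    (hsub : ∀ b ∈ B, b ⊆ V) (hsize : ∀ b ∈ B, b.card = 4)
    (hlin : ∀ b ∈ B, ∀ b' ∈ B, b ≠ b' → (b ∩ b').card ≤ 1) :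
    (¬ ∃ b₁ ∈ B, ∃ b₂ ∈ B, ∃ b₃ ∈ B, b₁ ≠ b₂ ∧ b₁ ≠ b₃ ∧ b₂ ≠ b₃ ∧
        Disjoint b₁ b₂ ∧ Disjoint b₁ b₃ ∧ Disjoint b₂ b₃) ∧
    ((B.powersetCard 2).filter fun s => ∀ b ∈ s, ∀ b' ∈ s, b ≠ b' → Disjoint b b').card ≤ 3 := by
  classical
  constructor
  · -- Part 1
    rintro ⟨b₁, hb₁, b₂, hb₂, b₃, hb₃, h12, h13, h23, d12, d13, d23⟩
    set U : Finset α := b₁ ∪ b₂ ∪ b₃ with hU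
    have hUcard : U.card = 12 := by
      rw [hU, card_union_of_disjoint (disjoint_union_left.mpr ⟨d13, d23⟩),
        card_union_of_disjoint d12, hsize _ hb₁, hsize _ hb₂, hsize _ hb₃]
    have hUV : U ⊆ V := union_subset (union_subset (hsub _ hb₁) (hsub _ hb₂)) (hsub _ hb₃)
    have hdiff : (V \ U).card = 1 := by rw [card_sdiff_of_subset hUV, hV, hUcard]
    obtain ⟨x, hx⟩ := card_eq_one.mp hdiff
    have hxVU : x ∈ V \ U := hx ▸ mem_singleton_self x
    have hxV : x ∈ V := (mem_sdiff.mp hxVU).1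
    have hxU : x ∉ U := (mem_sdiff.mp hxVU).2
    have hmem : ∀ b ∈ B, b ≠ b₁ → b ≠ b₂ → b ≠ b₃ → x ∈ b := by
      intro b hb n1 n2 n3
      by_contra hxb
      have hbU : b ⊆ U := by
        intro p hp
        by_contra hpU
        have hpVU : p ∈ V \ U := mem_sdiff.mpr ⟨hsub b hb hp, hpU⟩
        rw [hx, mem_singleton] at hpVU
        exact hxb (hpVU ▸ hp)
      have hle3 : b.card ≤ 3 := by
        have hsplit : b = b ∩ b₁ ∪ b ∩ b₂ ∪ b ∩ b₃ := by
          rw [← inter_union_distrib_left, ← inter_union_distrib_left, ← hU]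
          exact (inter_eq_left.mpr hbU).symm
        calc b.card = (b ∩ b₁ ∪ b ∩ b₂ ∪ b ∩ b₃).card := by rw [← hsplit]
          _ ≤ (b ∩ b₁ ∪ b ∩ b₂).card + (b ∩ b₃).card := card_union_le _ _
          _ ≤ (b ∩ b₁).card + (b ∩ b₂).card + (b ∩ b₃).card := by
              have := card_union_le (b ∩ b₁) (b ∩ b₂); omega
          _ ≤ 1 + 1 + 1 := by
              have h1 := hlin b hb b₁ hb₁ n1
              have h2 := hlin b hb b₂ hb₂ n2
              have h3 := hlin b hb b₃ hb₃ n3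
              omega
      rw [hsize b hb] at hle3; omega
    set C : Finset (Finset α) := B.filter (fun b => x ∈ b) with hC
    have hCsub : B \ {b₁, b₂, b₃} ⊆ C := by
      intro b hb
      rw [mem_sdiff, mem_insert, mem_insert, mem_singleton] at hb
      push_neg at hb
      exact mem_filter.mpr ⟨hb.1, hmem b hb.1 hb.2.1 hb.2.2.1 hb.2.2.2⟩
    have hC6 : 6 ≤ C.card := by
      have h3 : ({b₁, b₂, b₃} : Finset (Finset α)).card = 3 := by
        rw [card_insert_of_notMem (by simp [h12, h13]),
          card_insert_of_notMem (by simp [h23]), card_singleton]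
      have hsub3 : ({b₁, b₂, b₃} : Finset (Finset α)) ⊆ B := by
        intro b hb
        simp only [mem_insert, mem_singleton] at hb
        rcases hb with rfl | rfl | rfl <;> assumption
      have hsd := card_sdiff_of_subset hsub3
      have hle := card_le_card hCsub
      omega
    have hdisj : ∀ b ∈ C, ∀ b' ∈ C, b ≠ b' → Disjoint (b \ {x}) (b' \ {x}) := by
      intro b hb b' hb' hne
      rw [hC, mem_filter] at hb hb'
      rw [disjoint_left]
      intro p hp hp'
      rw [mem_sdiff, mem_singleton] at hp hp'
      have hcard := hlin b hb.1 b' hb'.1 hne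
      have hpx : p ∈ b ∩ b' := mem_inter.mpr ⟨hp.1, hp'.1⟩
      have hxx : x ∈ b ∩ b' := mem_inter.mpr ⟨hb.2, hb'.2⟩
      have hpeq : p = x := by
        by_contra hne2
        have : 1 < (b ∩ b').card := one_lt_card.mpr ⟨p, hpx, x, hxx, hne2⟩
        omega
      exact hp.2 hpeq
    have hbiU : (C.biUnion fun b => b \ {x}).card = ∑ b ∈ C, (b \ {x}).card :=
      card_biUnion hdisj
    have hsum3 : ∑ b ∈ C, (b \ {x}).card = 3 * C.card := by
      rw [Finset.sum_congr rfl (fun b hb => ?_), sum_const, smul_eq_mul, mul_comm]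
      rw [hC, mem_filter] at hb
      rw [card_sdiff_of_subset (singleton_subset_iff.mpr hb.2), hsize b hb.1, card_singleton]
    have hsubV : C.biUnion (fun b => b \ {x}) ⊆ V \ {x} := by
      intro p hp
      rw [mem_biUnion] at hp
      obtain ⟨b, hb, hpb⟩ := hp
      rw [mem_sdiff, mem_singleton] at hpb ⊢
      exact ⟨hsub b (mem_filter.mp hb).1 hpb.1, hpb.2⟩
    have hVx : (V \ {x}).card = 12 := by
      rw [card_sdiff_of_subset (singleton_subset_iff.mpr hxV), hV, card_singleton]
    have hfin := card_le_card hsubV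
    omega
  · -- Part 2
    set d : α → ℕ := fun p => (B.filter fun b => p ∈ b).card with hd
    have hdsum : ∑ p ∈ V, d p = 36 := by
      have h1 : ∑ p ∈ V, d p = ∑ b ∈ B, b.card := by
        simp only [hd, card_filter]
        rw [Finset.sum_comm]
        refine Finset.sum_congr rfl fun b hb => ?_
        rw [Finset.sum_ite_mem, Finset.sum_const, smul_eq_mul, mul_one,
          inter_eq_right.mpr (hsub b hb)]
      rw [h1, Finset.sum_congr rfl hsize, sum_const, smul_eq_mul, hB]
    have hQ : ∑ b ∈ B, ∑ b' ∈ B, (b ∩ b').card = ∑ p ∈ V, d p * d p := by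
      calc ∑ b ∈ B, ∑ b' ∈ B, (b ∩ b').card
          = ∑ b ∈ B, ∑ b' ∈ B, ∑ p ∈ V, (if p ∈ b then 1 else 0) * (if p ∈ b' then 1 else 0) := by
            refine Finset.sum_congr rfl fun b hb => Finset.sum_congr rfl fun b' hb' => ?_
            have h1 : ∀ p : α, (if p ∈ b then (1:ℕ) else 0) * (if p ∈ b' then 1 else 0)
                = if p ∈ b ∩ b' then 1 else 0 := by
              intro p; by_cases h1 : p ∈ b <;> by_cases h2 : p ∈ b' <;> simp [h1, h2]
            simp only [h1]
            rw [Finset.sum_ite_mem, Finset.sum_const, smul_eq_mul, mul_one,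
              inter_eq_right.mpr (fun p hp => hsub b hb (mem_of_mem_inter_left hp))]
        _ = ∑ b ∈ B, ∑ p ∈ V, ∑ b' ∈ B, (if p ∈ b then 1 else 0) * (if p ∈ b' then 1 else 0) :=
            Finset.sum_congr rfl fun b _ => Finset.sum_comm
        _ = ∑ p ∈ V, ∑ b ∈ B, ∑ b' ∈ B, (if p ∈ b then 1 else 0) * (if p ∈ b' then 1 else 0) :=
            Finset.sum_comm
        _ = ∑ p ∈ V, d p * d p := by
            refine Finset.sum_congr rfl fun p _ => ?_
            simp only [hd, card_filter]
            rw [← Finset.sum_mul_sum]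
    have hQlb : 102 ≤ ∑ p ∈ V, d p * d p := by
      have h1 : ∑ p ∈ V, 72 * d p ≤ ∑ p ∈ V, (13 * (d p * d p) + 99) :=
        Finset.sum_le_sum fun p _ => stmt5_quad (d p)
      rw [← Finset.mul_sum, hdsum] at h1
      rw [Finset.sum_add_distrib, ← Finset.mul_sum, sum_const, smul_eq_mul, hV] at h1
      have hpar : (∑ p ∈ V, d p * d p) % 2 = 0 := by
        have h2 : (∑ p ∈ V, d p * d p) % 2 = (∑ p ∈ V, d p) % 2 := by
          rw [Finset.sum_nat_mod]
          conv_rhs => rw [Finset.sum_nat_mod]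
          congr 1
          refine Finset.sum_congr rfl fun p _ => ?_
          rcases Nat.mod_two_eq_zero_or_one (d p) with h | h <;>
            simp [Nat.mul_mod, h]
        rw [h2, hdsum]
      omega
    -- split diagonal
    have hsplit : ∀ b ∈ B, ∑ b' ∈ B, (b ∩ b').card
        = (∑ b' ∈ B.erase b, (b ∩ b').card) + 4 := by
      intro b hb
      rw [← Finset.sum_erase_add B _ hb, inter_self, hsize b hb]
    have hQsplit : ∑ b ∈ B, ∑ b' ∈ B.erase b, (b ∩ b').card + 36 = ∑ p ∈ V, d p * d p := by
      rw [← hQ, Finset.sum_congr rfl hsplit, Finset.sum_add_distrib, sum_const, smul_eq_mul, hB]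
    -- disjoint-pair count
    have hkey : (∑ b ∈ B, ∑ b' ∈ B.erase b, if Disjoint b b' then 1 else 0)
        + ∑ b ∈ B, ∑ b' ∈ B.erase b, (b ∩ b').card ≤ 72 := by
      have h1 : ∀ b ∈ B, ∀ b' ∈ B.erase b,
          (if Disjoint b b' then 1 else 0) + (b ∩ b').card ≤ 1 := by
        intro b hb b' hb'
        obtain ⟨hne, hb'B⟩ := mem_erase.mp hb'
        by_cases hdj : Disjoint b b'
        · simp [hdj, card_eq_zero.mpr (disjoint_iff_inter_eq_empty.mp hdj)]
        · have := hlin b hb b' hb'B (fun h => hne (h ▸ rfl))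
          simp [hdj]; omega
      calc (∑ b ∈ B, ∑ b' ∈ B.erase b, if Disjoint b b' then 1 else 0)
            + ∑ b ∈ B, ∑ b' ∈ B.erase b, (b ∩ b').card
          = ∑ b ∈ B, ∑ b' ∈ B.erase b, ((if Disjoint b b' then 1 else 0) + (b ∩ b').card) := by
            rw [← Finset.sum_add_distrib]
            exact Finset.sum_congr rfl fun b _ => (Finset.sum_add_distrib).symm
        _ ≤ ∑ b ∈ B, ∑ b' ∈ B.erase b, 1 := by
            refine Finset.sum_le_sum fun b hb => Finset.sum_le_sum fun b' hb' => h1 b hb b' hb'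
        _ = ∑ b ∈ B, (B.erase b).card := by simp
        _ = ∑ b ∈ B, 8 := by
            refine Finset.sum_congr rfl fun b hb => ?_
            rw [card_erase_of_mem hb, hB]
        _ = 72 := by rw [sum_const, smul_eq_mul, hB]
    have hDord6 : (∑ b ∈ B, ∑ b' ∈ B.erase b, if Disjoint b b' then 1 else 0) ≤ 6 := by omega
    -- relate to unordered count
    set D := (B.powersetCard 2).filter
      (fun s => ∀ b ∈ s, ∀ b' ∈ s, b ≠ b' → Disjoint b b') with hD
    set Dord := (B ×ˢ B).filter (fun q => q.1 ≠ q.2 ∧ Disjoint q.1 q.2) with hDord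
    have hDordcard : Dord.card = ∑ b ∈ B, ∑ b' ∈ B.erase b, if Disjoint b b' then 1 else 0 := by
      rw [hDord, card_filter, Finset.sum_product]
      refine Finset.sum_congr rfl fun b hb => ?_
      rw [← Finset.sum_erase_add B _ hb]
      simp only [ne_eq, not_true_eq_false, false_and, if_false, add_zero]
      refine Finset.sum_congr rfl fun b' hb' => ?_
      obtain ⟨hne, _⟩ := mem_erase.mp hb'
      have hne2 : b ≠ b' := fun h => hne h.symm
      simp [hne2]
    have hmaps : ∀ q ∈ Dord, ({q.1, q.2} : Finset (Finset α)) ∈ D := by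
      rintro ⟨b, b'⟩ hq
      rw [hDord, mem_filter, mem_product] at hq
      obtain ⟨⟨hbB, hb'B⟩, hne, hdj⟩ := hq
      rw [hD, mem_filter, mem_powersetCard]
      refine ⟨⟨?_, ?_⟩, ?_⟩
      · intro c hc; simp only [mem_insert, mem_singleton] at hc
        rcases hc with rfl | rfl <;> assumption
      · rw [card_insert_of_notMem (by simpa using hne), card_singleton]
      · intro c hc c' hc' hnecc
        simp only [mem_insert, mem_singleton] at hc hc'
        rcases hc with rfl | rfl <;> rcases hc' with rfl | rfl <;>
          first | exact absurd rfl hnecc | exact hdj | exact hdj.symm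
    have hfiber : Dord.card = ∑ s ∈ D, (Dord.filter fun q => ({q.1, q.2} : Finset (Finset α)) = s).card :=
      card_eq_sum_card_fiberwise hmaps
    have hfib2 : ∀ s ∈ D, 2 ≤ (Dord.filter fun q => ({q.1, q.2} : Finset (Finset α)) = s).card := by
      intro s hs
      rw [hD, mem_filter, mem_powersetCard] at hs
      obtain ⟨⟨hsB, hs2⟩, hpred⟩ := hs
      obtain ⟨a, b, hab, rfl⟩ := card_eq_two.mp hs2
      have haB : a ∈ B := hsB (by simp)
      have hbB : b ∈ B := hsB (by simp)
      have hdj : Disjoint a b := hpred a (by simp) b (by simp) hab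
      have hsub2 : ({(a, b), (b, a)} : Finset (Finset α × Finset α))
          ⊆ Dord.filter fun q => ({q.1, q.2} : Finset (Finset α)) = {a, b} := by
        intro q hq
        simp only [mem_insert, mem_singleton] at hq
        rw [mem_filter, hDord, mem_filter, mem_product]
        rcases hq with rfl | rfl
        · exact ⟨⟨⟨haB, hbB⟩, hab, hdj⟩, rfl⟩
        · exact ⟨⟨⟨hbB, haB⟩, hab.symm, hdj.symm⟩, pair_comm b a⟩
      have hc2 : ({(a, b), (b, a)} : Finset (Finset α × Finset α)).card = 2 := by
        rw [card_insert_of_notMem (by simp [hab]), card_singleton]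
      calc 2 = ({(a, b), (b, a)} : Finset (Finset α × Finset α)).card := hc2.symm
        _ ≤ _ := card_le_card hsub2
    have h2D : 2 * D.card ≤ Dord.card := by
      rw [hfiber]
      calc 2 * D.card = ∑ _s ∈ D, 2 := by rw [sum_const, smul_eq_mul, mul_comm]
        _ ≤ _ := Finset.sum_le_sum hfib2
    rw [hDordcard] at h2D
    omega
end

section
/- Let B be a prelinear space on a set of at most 16 points consisting of exactly 6 blocks, each of size 5. Then no point lies in 4 or more blocks, and the numbers deg_i of points lying in exactly i blocks satisfy (deg_1, deg_2, deg_3) = (3, 12, 1), or (deg_1, deg_2, deg_3) = (0, 15, 0), or (deg_1, deg_2, deg_3) = (2, 14, 0). -/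
/-- The regularity of a point `p`: the number of blocks of `B` containing `p`. -/
def reg {α : Type*} [DecidableEq α] (B : Finset (Finset α)) (p : α) : ℕ :=
  (B.filter fun c => p ∈ c).card

/-- `degPts B V i` is `deg_i`: the number of points of `V` of regularity `i`. -/
def degPts {α : Type*} [DecidableEq α] (B : Finset (Finset α)) (V : Finset α) (i : ℕ) : ℕ :=
  (V.filter fun p => reg B p = i).card

theorem stmt6 {α : Type*} [DecidableEq α] (V : Finset α) (B : Finset (Finset α))
    (hV : V.card ≤ 16) (hB : B.card = 6)
    (hsub : ∀ b ∈ B, b ⊆ V) (hsize : ∀ b ∈ B, b.card = 5)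
    (hlin : ∀ b ∈ B, ∀ b' ∈ B, b ≠ b' → (b ∩ b').card ≤ 1) :
    (∀ p ∈ V, reg B p ≤ 3) ∧
    ((degPts B V 1, degPts B V 2, degPts B V 3) = (3, 12, 1) ∨
     (degPts B V 1, degPts B V 2, degPts B V 3) = (0, 15, 0) ∨
     (degPts B V 1, degPts B V 2, degPts B V 3) = (2, 14, 0)) := by
  -- First: every point has regularity ≤ 3.
  have hreg : ∀ p ∈ V, reg B p ≤ 3 := by
    intro p hp
    by_contra h
    push_neg at h
    set C := B.filter (fun c => p ∈ c) with hC
    have hCcard : 4 ≤ C.card := h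
    have hdisj : ∀ b ∈ C, ∀ b' ∈ C, b ≠ b' → Disjoint (b.erase p) (b'.erase p) := by
      intro b hb b' hb' hne
      rw [Finset.disjoint_left]
      intro q hq hq'
      have hqb := Finset.mem_of_mem_erase hq
      have hqb' := Finset.mem_of_mem_erase hq'
      have hqp : q ≠ p := Finset.ne_of_mem_erase hq
      have hb1 := Finset.mem_filter.mp hb
      have hb'1 := Finset.mem_filter.mp hb'
      have hle := hlin b hb1.1 b' hb'1.1 hne
      have hsubpq : ({p, q} : Finset α) ⊆ b ∩ b' := by
        intro x hx
        simp only [Finset.mem_insert, Finset.mem_singleton] at hx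
        rcases hx with rfl | rfl
        · exact Finset.mem_inter.mpr ⟨hb1.2, hb'1.2⟩
        · exact Finset.mem_inter.mpr ⟨hqb, hqb'⟩
      have : ({p, q} : Finset α).card = 2 := by
        rw [Finset.card_insert_of_notMem (by simpa using hqp.symm), Finset.card_singleton]
      have := Finset.card_le_card hsubpq
      omega
    have hcard : (C.biUnion (fun b => b.erase p)).card = ∑ b ∈ C, (b.erase p).card :=
      Finset.card_biUnion hdisj
    have hsum : ∑ b ∈ C, (b.erase p).card = 4 * C.card := by
      rw [Finset.sum_congr rfl (fun b hb => ?_), Finset.sum_const, smul_eq_mul, mul_comm]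
      have hb1 := Finset.mem_filter.mp hb
      rw [Finset.card_erase_of_mem hb1.2, hsize b hb1.1]
    have hsubV : C.biUnion (fun b => b.erase p) ⊆ V.erase p := by
      intro x hx
      obtain ⟨b, hb, hxb⟩ := Finset.mem_biUnion.mp hx
      have hb1 := Finset.mem_filter.mp hb
      exact Finset.mem_erase.mpr ⟨Finset.ne_of_mem_erase hxb,
        hsub b hb1.1 (Finset.mem_of_mem_erase hxb)⟩
    have h1 := Finset.card_le_card hsubV
    have h2 : (V.erase p).card ≤ 15 := by
      rw [Finset.card_erase_of_mem hp]; omega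
    rw [hcard, hsum] at h1
    omega
  -- Total incidences: ∑ reg = 30.
  have hsum1 : ∑ p ∈ V, reg B p = 30 := by
    have : ∀ p, reg B p = ∑ b ∈ B, if p ∈ b then 1 else 0 := by
      intro p; rw [reg, Finset.card_filter]
    calc ∑ p ∈ V, reg B p = ∑ p ∈ V, ∑ b ∈ B, if p ∈ b then 1 else 0 := by
          exact Finset.sum_congr rfl (fun p _ => this p)
      _ = ∑ b ∈ B, ∑ p ∈ V, if p ∈ b then 1 else 0 := Finset.sum_comm
      _ = ∑ b ∈ B, (V.filter (fun p => p ∈ b)).card := by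
          exact Finset.sum_congr rfl (fun b _ => (Finset.card_filter _ _).symm)
      _ = ∑ b ∈ B, b.card := by
          refine Finset.sum_congr rfl (fun b hb => ?_)
          rw [Finset.filter_mem_eq_inter, Finset.inter_eq_right.mpr (hsub b hb)]
      _ = 30 := by
          rw [Finset.sum_congr rfl (fun b hb => hsize b hb), Finset.sum_const, hB]; rfl
  -- Pairs of blocks through a point: ∑ reg*(reg-1) ≤ 30.
  have hsum2 : ∑ p ∈ V, reg B p * (reg B p - 1) ≤ 30 := by
    have key : ∀ p, reg B p * (reg B p - 1)
        = ∑ q ∈ B.offDiag, if p ∈ q.1 ∧ p ∈ q.2 then 1 else 0 := by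
      intro p
      have h1 : (B.filter (fun c => p ∈ c)).offDiag
          = B.offDiag.filter (fun q => p ∈ q.1 ∧ p ∈ q.2) := by
        ext q
        simp only [Finset.mem_offDiag, Finset.mem_filter]
        tauto
      have h2 := Finset.offDiag_card (B.filter (fun c => p ∈ c))
      rw [← Finset.card_filter, ← h1, h2, reg]
      cases (B.filter (fun c => p ∈ c)).card with
      | zero => simp
      | succ n => simp [Nat.mul_succ]
    calc ∑ p ∈ V, reg B p * (reg B p - 1)
        = ∑ p ∈ V, ∑ q ∈ B.offDiag, if p ∈ q.1 ∧ p ∈ q.2 then 1 else 0 :=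
          Finset.sum_congr rfl (fun p _ => key p)
      _ = ∑ q ∈ B.offDiag, ∑ p ∈ V, if p ∈ q.1 ∧ p ∈ q.2 then 1 else 0 := Finset.sum_comm
      _ = ∑ q ∈ B.offDiag, (V.filter (fun p => p ∈ q.1 ∧ p ∈ q.2)).card :=
          Finset.sum_congr rfl (fun q _ => (Finset.card_filter _ _).symm)
      _ ≤ ∑ q ∈ B.offDiag, 1 := by
          refine Finset.sum_le_sum (fun q hq => ?_)
          obtain ⟨hq1, hq2, hne⟩ := Finset.mem_offDiag.mp hq
          refine le_trans (Finset.card_le_card ?_) (hlin q.1 hq1 q.2 hq2 hne)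
          intro x hx
          have := Finset.mem_filter.mp hx
          exact Finset.mem_inter.mpr ⟨this.2.1, this.2.2⟩
      _ = B.offDiag.card := by rw [Finset.sum_const, smul_eq_mul, mul_one]
      _ ≤ 30 := by rw [Finset.offDiag_card, hB]
  -- fiberwise decomposition over regularity values 0..3
  have hmaps : ∀ p ∈ V, reg B p ∈ Finset.range 4 := fun p hp =>
    Finset.mem_range.mpr (by have := hreg p hp; omega)
  have hfib1 : ∑ y ∈ Finset.range 4, y * degPts B V y = 30 := by
    rw [← hsum1, ← Finset.sum_fiberwise_of_maps_to hmaps (fun p => reg B p)]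
    refine Finset.sum_congr rfl (fun y _ => ?_)
    rw [degPts]
    rw [Finset.sum_congr rfl (fun p hp => (Finset.mem_filter.mp hp).2), Finset.sum_const,
      smul_eq_mul, mul_comm]
  have hfib2 : ∑ y ∈ Finset.range 4, y * (y - 1) * degPts B V y ≤ 30 := by
    calc ∑ y ∈ Finset.range 4, y * (y-1) * degPts B V y
        = ∑ p ∈ V, reg B p * (reg B p - 1) := by
          rw [← Finset.sum_fiberwise_of_maps_to hmaps (fun p => reg B p * (reg B p - 1))]
          refine Finset.sum_congr rfl (fun y _ => ?_)
          rw [degPts]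
          rw [Finset.sum_congr rfl (fun p hp => by
            rw [(Finset.mem_filter.mp hp).2]), Finset.sum_const, smul_eq_mul, mul_comm]
      _ ≤ 30 := hsum2
  have hfib3 : ∑ y ∈ Finset.range 4, degPts B V y = V.card :=
    (Finset.card_eq_sum_card_fiberwise hmaps).symm
  rw [Finset.sum_range_succ, Finset.sum_range_succ, Finset.sum_range_succ,
    Finset.sum_range_succ, Finset.sum_range_zero] at hfib1 hfib2 hfib3
  refine ⟨hreg, ?_⟩
  simp only [Prod.mk.injEq]
  have hd : degPts B V 3 = 0 ∨ degPts B V 3 = 1 := by omega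
  rcases hd with hd | hd <;> rw [hd] at hfib1 hfib2 hfib3 ⊢ <;> omega
end
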